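/- arXiv:2602.11837 — 4 statements merged into one kernel-verified Lean document; each statement's English description precedes it below -/
import Mathlib

section
/- Let A be an n-by-n self-adjoint complex matrix, f an increasing real function on the spectrum of A, and U an n-by-n unitary matrix. Then Tr(f(A)(A - U A U*)) ≥ 0. -/
open Matrix Set Filter

/-- Functional calculus for a Hermitian matrix: apply `f` to the eigenvalues. -/
noncomputable def hermCalc {m : Type*} [Fintype m] [DecidableEq m]
    (A : Matrix m m ℂ) (f : ℝ → ℝ) : Matrix m m ℂ :=
  if hA : A.IsHermitian then
    (Matrix.IsHermitian.eigenvectorUnitary hA : Matrix m m ℂ) *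
      Matrix.diagonal (fun i => (f (hA.eigenvalues i) : ℂ)) *
      star (Matrix.IsHermitian.eigenvectorUnitary hA : Matrix m m ℂ)
  else 0

/-!
Diagonalize `A = V D V*` and put `W = V* U V`. Then
`Tr(f(A) U A U*) = ∑ᵢⱼ |Wᵢⱼ|² f(λᵢ) λⱼ`, and the matrix `(|Wᵢⱼ|²)` is doubly stochastic since `W`
is unitary. The sum is linear in that matrix, so by Birkhoff's theorem it suffices to bound it at
permutation matrices, where `∑ᵢ f(λᵢ) λ_{σ i} ≤ ∑ᵢ f(λᵢ) λᵢ = Tr(f(A) A)` is the rearrangement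
inequality: `f ∘ λ` and `λ` are similarly ordered because `f` is monotone on the spectrum.
-/

section

variable {n : Type*} [Fintype n] [DecidableEq n]

theorem Monovary.dotProduct_mulVec_le_of_mem_doublyStochastic {x y : n → ℝ}
    (hxy : Monovary x y) {P : Matrix n n ℝ} (hP : P ∈ doublyStochastic ℝ n) :
    x ⬝ᵥ P *ᵥ y ≤ x ⬝ᵥ y := by
  have hlin : IsLinearMap ℝ fun P : Matrix n n ℝ => x ⬝ᵥ P *ᵥ y :=
    ⟨fun P Q => by simp only [add_mulVec, dotProduct_add],
     fun c P => by simp only [smul_mulVec, dotProduct_smul]⟩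
  rw [← SetLike.mem_coe, doublyStochastic_eq_convexHull_permMatrix] at hP
  refine convexHull_min ?_ (convex_halfSpace_le hlin _) hP
  rintro _ ⟨σ, rfl⟩
  change x ⬝ᵥ σ.permMatrix ℝ *ᵥ y ≤ x ⬝ᵥ y
  rw [permMatrix_mulVec]
  exact hxy.sum_mul_comp_perm_le_sum_mul

namespace Matrix

theorem sum_normSq_eq_one_of_mul_star_self {U : Matrix n n ℂ} (hU : U * star U = 1) (i : n) :
    ∑ j, Complex.normSq (U i j) = 1 := by
  have h := congrFun (congrFun hU i) i
  simp only [mul_apply, star_apply, one_apply_eq, Complex.star_def, Complex.mul_conj] at h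
  exact_mod_cast h

theorem map_normSq_mem_doublyStochastic {U : Matrix n n ℂ} (hU : U ∈ unitaryGroup n ℂ) :
    U.map Complex.normSq ∈ doublyStochastic ℝ n := by
  refine mem_doublyStochastic_iff_sum.2 ⟨fun i j => Complex.normSq_nonneg _,
    sum_normSq_eq_one_of_mul_star_self (Unitary.mul_star_self_of_mem hU), fun j => ?_⟩
  have := sum_normSq_eq_one_of_mul_star_self (Unitary.mul_star_self_of_mem
    (Unitary.star_mem hU)) j
  simpa only [map_apply, star_apply, Complex.star_def, Complex.normSq_conj, star_star] using this

theorem trace_diagonal_mul_mul_diagonal_mul_star (a b : n → ℝ) (W : Matrix n n ℂ) :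
    trace (diagonal (fun i => (a i : ℂ)) * W * diagonal (fun i => (b i : ℂ)) * star W) =
      ((a ⬝ᵥ W.map Complex.normSq *ᵥ b : ℝ) : ℂ) := by
  simp only [trace, diag, mul_apply, diagonal_apply, ite_mul, mul_ite, zero_mul, mul_zero,
    Finset.sum_ite_eq, Finset.sum_ite_eq', Finset.mem_univ, if_true, star_apply, dotProduct, mulVec,
    map_apply, Finset.mul_sum]
  push_cast
  refine Finset.sum_congr rfl fun i _ => Finset.sum_congr rfl fun j _ => ?_
  rw [← Complex.mul_conj, ← Complex.star_def]
  ring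

theorem trace_unitary_conj_mul_sub {V : Matrix n n ℂ} (hV : V ∈ unitaryGroup n ℂ)
    (U X Y : Matrix n n ℂ) :
    trace (V * X * star V * (V * Y * star V - U * (V * Y * star V) * star U)) =
      trace (X * Y) - trace (X * (star V * U * V) * Y * star (star V * U * V)) := by
  have hcancel : ∀ Z, star V * (V * Z) = Z := fun Z => by
    rw [← Matrix.mul_assoc, Unitary.star_mul_self_of_mem hV, Matrix.one_mul]
  have htrace : ∀ Z, trace (V * Z * star V) = trace Z := fun Z => by
    rw [trace_mul_cycle, Unitary.star_mul_self_of_mem hV, Matrix.one_mul]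
  rw [mul_sub, trace_sub, ← htrace (X * Y), ← htrace (X * (star V * U * V) * Y * _)]
  simp only [star_mul, star_star, Matrix.mul_assoc, hcancel, Unitary.mul_star_self_of_mem hV,
    Matrix.mul_one]

end Matrix

end

/-- If `A` is Hermitian, `f` is increasing on the (real) spectrum of `A`, and `U` is
unitary, then `Tr(f(A)(A - U A U*)) ≥ 0`. -/
theorem stmt_0 {n : Type*} [Fintype n] [DecidableEq n]
    (A : Matrix n n ℂ) (hA : A.IsHermitian) (f : ℝ → ℝ)
    (hf : MonotoneOn f (spectrum ℝ A))
    (U : Matrix n n ℂ) (hU : U ∈ Matrix.unitaryGroup n ℂ) :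
    0 ≤ (Matrix.trace (hermCalc A f * (A - U * A * star U))).re := by
  set lam := hA.eigenvalues
  set V : Matrix n n ℂ := (hA.eigenvectorUnitary : Matrix n n ℂ)
  have hV : V ∈ unitaryGroup n ℂ := hA.eigenvectorUnitary.2
  have hA' : A = V * diagonal (fun i => (lam i : ℂ)) * star V := hA.spectral_theorem
  have hmono : Monovary (f ∘ lam) lam := fun i j hij =>
    hf (hA.eigenvalues_mem_spectrum_real i) (hA.eigenvalues_mem_spectrum_real j) hij.le
  have hsplit := trace_unitary_conj_mul_sub hV U (diagonal fun i => (f (lam i) : ℂ))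
    (diagonal fun i => (lam i : ℂ))
  rw [← hA'] at hsplit
  have hdiag : (trace (diagonal (fun i => (f (lam i) : ℂ)) * diagonal fun i => (lam i : ℂ))).re =
      (f ∘ lam) ⬝ᵥ lam := by
    simp [trace_diagonal, dotProduct]
  rw [hermCalc, dif_pos hA, hsplit, Complex.sub_re, hdiag,
    trace_diagonal_mul_mul_diagonal_mul_star, Complex.ofReal_re, sub_nonneg]
  exact hmono.dotProduct_mulVec_le_of_mem_doublyStochastic <| map_normSq_mem_doublyStochastic <|
    mul_mem (mul_mem (Unitary.star_mem hV) hU) hV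
end

section
/- Let A be an n-by-n self-adjoint complex matrix, f an increasing real function on the spectrum of A, and U a unitary matrix. If Tr(f(A)(A - U A U*)) = 0, then U commutes with f(A). -/
/-!
Diagonalize `A = V D V*` and put `W = V* U V`. The trace becomes
`∑ i j, |W i j|² f(λ i) (λ i - λ j)`, and `B = (|W i j|²)` is doubly stochastic.
Since `f` is monotone on the spectrum, it has a discrete antiderivative `F` there (trapezoid rule)
with `F x - F y ≤ f x (x - y)`, with equality only if `f x = f y`. As `B` is doubly stochastic,
`∑ i j, B i j (F (λ i) - F (λ j)) = 0`; subtracting it makes every term of the sum nonnegative,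
so every term vanishes: `W i j ≠ 0` forces `f (λ i) = f (λ j)`. Hence `W` commutes with `f(D)`,
and `U` with `f(A)`.
-/

open Matrix Set Filter

def IsPotentialOn (s : Finset ℝ) (f F : ℝ → ℝ) : Prop :=
  ∀ x ∈ s, ∀ y ∈ s, F x - F y ≤ f x * (x - y) ∧ (F x - F y = f x * (x - y) → f x = f y)

-- Extend `F` to a new maximum `a` by the trapezoid rule.
theorem IsPotentialOn.insert_of_max_lt {s : Finset ℝ} {f F : ℝ → ℝ}
    (hF : IsPotentialOn s f F) {m a : ℝ} (hm : m ∈ s) (hmax : ∀ y ∈ s, y ≤ m) (hma : m < a)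
    (hf : MonotoneOn f (insert a s : Finset ℝ)) :
    IsPotentialOn (insert a s) f (Function.update F a (F m + (f m + f a) / 2 * (a - m))) := by
  have hne : ∀ y ∈ s, y ≠ a := fun y hy h => (hmax y hy).not_gt (h ▸ hma)
  have hfle : ∀ x ∈ s, ∀ y ∈ insert a s, x ≤ y → f x ≤ f y := fun x hx y hy hxy =>
    hf (by simp [hx]) (by simpa using hy) hxy
  have hfma : f m ≤ f a := hfle m hm a (Finset.mem_insert_self a s) hma.le
  have ham : a - m ≠ 0 := sub_ne_zero.2 hma.ne'
  intro x hx y hy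
  rcases Finset.mem_insert.1 hx with hxa | hxs <;> rcases Finset.mem_insert.1 hy with hya | hys
  · simp [hxa, hya]
  · subst x
    rw [Function.update_self, Function.update_of_ne (hne y hys)]
    obtain ⟨hle, heq⟩ := hF m hm y hys
    have hym := hmax y hys
    have h₁ : f m * (m - y) ≤ f a * (m - y) := mul_le_mul_of_nonneg_right hfma (by linarith)
    have h₂ : (f m + f a) / 2 * (a - m) ≤ f a * (a - m) :=
      mul_le_mul_of_nonneg_right (by linarith) (by linarith)
    refine ⟨by linarith, fun h => ?_⟩
    have hfm : f m = f a := by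
      have := mul_right_cancel₀ ham (show (f m + f a) / 2 * (a - m) = f a * (a - m) by linarith)
      linarith
    rw [← hfm, heq (by linarith)]
  · subst y
    rw [Function.update_self, Function.update_of_ne (hne x hxs)]
    obtain ⟨hle, heq⟩ := hF x hxs m hm
    have hfxm : f x ≤ f m := hfle x hxs m (Finset.mem_insert_of_mem hm) (hmax x hxs)
    have hfxa : f x ≤ f a := hfle x hxs a (Finset.mem_insert_self a s) (by linarith [hmax x hxs])
    have h₁ : f x * (a - m) ≤ (f m + f a) / 2 * (a - m) :=
      mul_le_mul_of_nonneg_right (by linarith) (by linarith)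
    refine ⟨by linarith, fun h => ?_⟩
    have := mul_right_cancel₀ ham (show (f m + f a) / 2 * (a - m) = f x * (a - m) by linarith)
    linarith
  · rw [Function.update_of_ne (hne x hxs), Function.update_of_ne (hne y hys)]
    exact hF x hxs y hys

theorem MonotoneOn.exists_isPotentialOn {s : Finset ℝ} {f : ℝ → ℝ} (hf : MonotoneOn f s) :
    ∃ F, IsPotentialOn s f F := by
  induction s using Finset.induction_on_max with
  | empty => exact ⟨0, by simp [IsPotentialOn]⟩
  | insert a s ha ih =>
    obtain ⟨F, hF⟩ := ih (hf.mono (by simp))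
    rcases s.eq_empty_or_nonempty with rfl | hs
    · exact ⟨0, by simp [IsPotentialOn]⟩
    · exact ⟨_, hF.insert_of_max_lt (s.max'_mem hs) (fun y hy => s.le_max' y hy)
        (ha _ (s.max'_mem hs)) hf⟩

section Matrix

variable {n : Type*} [Fintype n] [DecidableEq n]

theorem sum_sum_mul_sub_eq_zero_of_mem_doublyStochastic {R : Type*} [Ring R] [PartialOrder R]
    [IsOrderedRing R] {B : Matrix n n R} (hB : B ∈ doublyStochastic R n) (g : n → R) :
    ∑ i, ∑ j, B i j * (g i - g j) = 0 := by
  simp only [mul_sub, Finset.sum_sub_distrib, ← Finset.sum_mul,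
    sum_row_of_mem_doublyStochastic hB, one_mul]
  rw [Finset.sum_comm]
  simp only [← Finset.sum_mul, sum_col_of_mem_doublyStochastic hB, one_mul, sub_self]

theorem MonotoneOn.eq_of_sum_doublyStochastic_mul_sub_eq_zero {d : n → ℝ} {f : ℝ → ℝ}
    (hf : MonotoneOn f (range d)) {B : Matrix n n ℝ} (hB : B ∈ doublyStochastic ℝ n)
    (h : ∑ i, ∑ j, B i j * (f (d i) * (d i - d j)) = 0) {i j : n} (hij : B i j ≠ 0) :
    f (d i) = f (d j) := by
  obtain ⟨F, hF⟩ :=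
    MonotoneOn.exists_isPotentialOn (s := Finset.univ.image d) (by simpa using hf)
  have hd (k : n) : d k ∈ Finset.univ.image d := Finset.mem_image_of_mem d (Finset.mem_univ k)
  set gap : n → n → ℝ := fun k l => f (d k) * (d k - d l) - (F (d k) - F (d l))
  have hgap : ∀ k l, 0 ≤ B k l * gap k l := fun k l =>
    mul_nonneg (nonneg_of_mem_doublyStochastic hB) (sub_nonneg.2 (hF _ (hd k) _ (hd l)).1)
  have hsum : ∑ k, ∑ l, B k l * gap k l = 0 := by
    have hF0 := sum_sum_mul_sub_eq_zero_of_mem_doublyStochastic hB fun k => F (d k)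
    simp only [gap, mul_sub (B _ _) (f (d _) * _), Finset.sum_sub_distrib] at hF0 ⊢
    rw [h, hF0, sub_self]
  have hzero : B i j * gap i j = 0 := by
    rw [Finset.sum_eq_zero_iff_of_nonneg fun k _ => Finset.sum_nonneg fun l _ => hgap k l] at hsum
    exact (Finset.sum_eq_zero_iff_of_nonneg fun l _ => hgap i l).1 (hsum i (Finset.mem_univ i)) j
      (Finset.mem_univ j)
  exact (hF _ (hd i) _ (hd j)).2 (by linarith [(mul_eq_zero.1 hzero).resolve_left hij])

theorem Matrix.trace_conjStarAlgAut {R : Type*} [CommSemiring R] [StarRing R]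
    (u : unitary (Matrix n n R)) (X : Matrix n n R) :
    trace (Unitary.conjStarAlgAut R (Matrix n n R) u X) = trace X := by
  rw [Unitary.conjStarAlgAut_apply, trace_mul_cycle, Unitary.coe_star_mul_self, Matrix.one_mul]

theorem Matrix.commute_diagonal_of_apply_ne_zero {R : Type*} [CommSemiring R] {W : Matrix n n R}
    {e : n → R} (h : ∀ i j, W i j ≠ 0 → e i = e j) : Commute W (diagonal e) := by
  ext i j
  rw [mul_diagonal, diagonal_mul]
  by_cases hij : W i j = 0
  · simp [hij]
  · rw [h i j hij, mul_comm]

variable {𝕜 : Type*} [RCLike 𝕜]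

theorem Matrix.norm_sq_mem_doublyStochastic {W : Matrix n n 𝕜} (hW : W ∈ unitaryGroup n 𝕜) :
    (of fun i j => ‖W i j‖ ^ 2) ∈ doublyStochastic ℝ n := by
  rw [mem_doublyStochastic_iff_sum]
  refine ⟨fun _ _ => sq_nonneg _, fun i => ?_, fun j => ?_⟩
  · have h := congr_fun₂ (mem_unitaryGroup_iff.1 hW) i i
    simp only [mul_apply, star_apply, RCLike.star_def, RCLike.mul_conj, one_apply_eq] at h
    exact_mod_cast h
  · have h := congr_fun₂ (mem_unitaryGroup_iff'.1 hW) j j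
    simp only [mul_apply, star_apply, RCLike.star_def, RCLike.conj_mul, one_apply_eq] at h
    exact_mod_cast h

theorem Matrix.trace_diagonal_mul_sub_conj {W : Matrix n n 𝕜} (hW : W ∈ unitaryGroup n 𝕜)
    (d e : n → ℝ) :
    trace (diagonal (fun i => (e i : 𝕜)) *
        (diagonal (fun i => (d i : 𝕜)) - W * diagonal (fun i => (d i : 𝕜)) * star W)) =
      ((∑ i, ∑ j, ‖W i j‖ ^ 2 * (e i * (d i - d j)) : ℝ) : 𝕜) := by
  have hrow (i : n) : ∑ j, ‖W i j‖ ^ 2 = 1 :=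
    sum_row_of_mem_doublyStochastic (norm_sq_mem_doublyStochastic hW) i
  have hconj (i : n) :
      (W * diagonal (fun i => (d i : 𝕜)) * star W) i i =
        ((∑ j, ‖W i j‖ ^ 2 * d j : ℝ) : 𝕜) := by
    rw [mul_apply]
    simp only [mul_diagonal, star_apply, RCLike.star_def]
    push_cast
    refine Finset.sum_congr rfl fun j _ => ?_
    rw [← RCLike.mul_conj]; ring
  have hweighted (i : n) :
      ∑ j, ‖W i j‖ ^ 2 * (e i * (d i - d j)) = e i * (d i - ∑ j, ‖W i j‖ ^ 2 * d j) :=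
    calc ∑ j, ‖W i j‖ ^ 2 * (e i * (d i - d j))
        = ∑ j, (e i * d i * ‖W i j‖ ^ 2 - e i * (‖W i j‖ ^ 2 * d j)) :=
          Finset.sum_congr rfl fun j _ => by ring
      _ = e i * d i * ∑ j, ‖W i j‖ ^ 2 - e i * ∑ j, ‖W i j‖ ^ 2 * d j := by
          rw [Finset.sum_sub_distrib, Finset.mul_sum, Finset.mul_sum]
      _ = e i * (d i - ∑ j, ‖W i j‖ ^ 2 * d j) := by rw [hrow, mul_one, mul_sub]
  simp only [trace, diag_apply, diagonal_mul, sub_apply, hconj, diagonal_apply_eq, hweighted]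
  push_cast
  rfl

end Matrix

/-- Equality case: if `Tr(f(A)(A - U A U*)) = 0` then `U` commutes with `f(A)`. -/
theorem stmt_1 {n : Type*} [Fintype n] [DecidableEq n]
    (A : Matrix n n ℂ) (hA : A.IsHermitian) (f : ℝ → ℝ)
    (hf : MonotoneOn f (spectrum ℝ A))
    (U : Matrix n n ℂ) (hU : U ∈ Matrix.unitaryGroup n ℂ)
    (heq : Matrix.trace (hermCalc A f * (A - U * A * star U)) = 0) :
    U * hermCalc A f = hermCalc A f * U := by
  set V := hA.eigenvectorUnitary
  set φ := Unitary.conjStarAlgAut ℂ (Matrix n n ℂ) V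
  set W := φ.symm U with hW
  have hWU : W ∈ unitaryGroup n ℂ := by
    rw [hW, Unitary.conjStarAlgAut_symm_apply]
    exact mul_mem (mul_mem (star V).2 hU) V.2
  set ev := hA.eigenvalues
  have hA' : A = φ (diagonal fun i => (ev i : ℂ)) := hA.spectral_theorem
  have hfA : hermCalc A f = φ (diagonal fun i => (f (ev i) : ℂ)) := dif_pos hA
  have hUW : U = φ W := (φ.apply_symm_apply U).symm
  rw [hfA, hA', hUW, ← map_star, ← map_mul, ← map_mul, ← map_sub, ← map_mul,
    trace_conjStarAlgAut] at heq
  -- not a `rw`: the lemma's `RCLike.ofReal` is `Complex.ofReal` only up to unfolding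
  have hsum := RCLike.ofReal_eq_zero.1 <|
    (trace_diagonal_mul_sub_conj (𝕜 := ℂ) hWU ev fun i => f (ev i)).symm.trans heq
  have hf' : MonotoneOn f (range ev) :=
    hf.mono (range_subset_iff.2 hA.eigenvalues_mem_spectrum_real)
  have hcomm : Commute W (diagonal fun i => (f (ev i) : ℂ)) :=
    commute_diagonal_of_apply_ne_zero fun i j hij => congrArg _ <|
      hf'.eq_of_sum_doublyStochastic_mul_sub_eq_zero (norm_sq_mem_doublyStochastic hWU) hsum
        (by simpa using hij)
  rw [hfA, hUW, ← map_mul, ← map_mul, hcomm.eq]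
end

section
/- Every doubly stochastic n-by-n matrix of the form (|⟨U v_j, v_i⟩|²)_{ij}, where U is unitary and {v_i} is an orthonormal basis, is a convex combination of permutation matrices, and consequently for an increasing function f and eigenvalues λ_1 ≥ ⋯ ≥ λ_n of a Hermitian matrix A, Σ_i f(λ_i)(λ_i − ⟨U A U* v_i, v_i⟩) = Σ_{σ ∈ S_n} c(σ) Σ_j λ_j (f(λ_j) − f(λ_{σ(j)})) for some probability weights c(σ). -/
/-!
Let `V` be the unitary matrix whose columns are the `v i`, so that `⟨v i, B v j⟩ = (Vᴴ B V) i j`.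
Then `|⟨v i, U v j⟩|²` are the squared moduli of the entries of the unitary `W = Vᴴ U V`, hence
form a doubly stochastic matrix, and Birkhoff–von Neumann writes it as a convex combination of
permutation matrices. Since `Vᴴ A V = diag λ`, also `⟨v i, U A U* v i⟩ = (W diag(λ) Wᴴ) i i
= Σ_j λ_j |W i j|²`, and substituting the convex combination gives the identity.
-/

open Matrix Set Filter

/-- The standard sesquilinear inner product on `Fin N → ℂ` (conjugate-linear in the
first variable). -/
noncomputable def dotc {N : ℕ} (x y : Fin N → ℂ) : ℂ :=
  ∑ i, (starRingEnd ℂ) (x i) * y i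

section Stochastic

variable {n R : Type*} [Fintype n] [DecidableEq n]

theorem exists_perm_weights_of_mem_doublyStochastic [Field R] [LinearOrder R]
    [IsStrictOrderedRing R] {M : Matrix n n R} (hM : M ∈ doublyStochastic R n) :
    ∃ c : Equiv.Perm n → R, (∀ σ, c σ ∈ Icc 0 1) ∧ ∑ σ, c σ = 1 ∧
      ∀ i j, M i j = ∑ σ, c σ * if i = σ j then 1 else 0 := by
  -- Decomposing `Mᵀ` rather than `M` avoids reindexing the weights by `σ⁻¹`.
  obtain ⟨c, hc0, hc1, hcM⟩ :=
    exists_eq_sum_perm_of_mem_doublyStochastic (transpose_mem_doublyStochastic_iff.2 hM)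
  refine ⟨c, fun σ => ⟨hc0 σ, hc1 ▸ Finset.single_le_sum (fun τ _ => hc0 τ) (Finset.mem_univ σ)⟩,
    hc1, fun i j => ?_⟩
  rw [← transpose_apply M, ← hcM]
  simp [Matrix.sum_apply, PEquiv.toMatrix_apply, Equiv.toPEquiv_apply, eq_comm]

theorem sum_mul_sub_sum_eq_sum_perm [CommRing R] {c : Equiv.Perm n → R} (hc : ∑ σ, c σ = 1)
    {M : n → n → R} (hM : ∀ i j, M i j = ∑ σ, c σ * if i = σ j then 1 else 0) (a g : n → R) :
    ∑ i, g i * (a i - ∑ j, a j * M i j) = ∑ σ, c σ * ∑ j, a j * (g j - g (σ j)) := by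
  have hdiag : ∑ i, g i * a i = ∑ σ, c σ * ∑ j, a j * g j := by
    rw [← Finset.sum_mul, hc, one_mul]
    exact Finset.sum_congr rfl fun i _ => mul_comm _ _
  have hcol : ∀ j, ∑ i, g i * M i j = ∑ σ, c σ * g (σ j) := fun j => by
    simp only [hM, Finset.mul_sum]
    rw [Finset.sum_comm]
    simp [mul_comm]
  have hoff : ∑ i, g i * ∑ j, a j * M i j = ∑ σ, c σ * ∑ j, a j * g (σ j) := calc
    _ = ∑ j, a j * ∑ i, g i * M i j := by
      simp only [Finset.mul_sum]
      rw [Finset.sum_comm]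
      exact Finset.sum_congr rfl fun j _ => Finset.sum_congr rfl fun i _ => mul_left_comm _ _ _
    _ = _ := by
      simp only [hcol, Finset.mul_sum]
      rw [Finset.sum_comm]
      exact Finset.sum_congr rfl fun σ _ => Finset.sum_congr rfl fun j _ => mul_left_comm _ _ _
  simp only [mul_sub, Finset.sum_sub_distrib, hdiag, hoff]

theorem norm_sq_entries_mem_doublyStochastic {𝕜 : Type*} [RCLike 𝕜] {W : Matrix n n 𝕜}
    (hW : W ∈ unitaryGroup n 𝕜) : of (fun i j => ‖W i j‖ ^ 2) ∈ doublyStochastic ℝ n := by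
  have hrow : ∀ i, ∑ j, ‖W i j‖ ^ 2 = 1 := fun i => by
    have := congrFun₂ (mem_unitaryGroup_iff.1 hW) i i
    simp only [mul_apply, star_apply, RCLike.star_def, RCLike.mul_conj, one_apply_eq] at this
    exact_mod_cast this
  have hcol : ∀ j, ∑ i, ‖W i j‖ ^ 2 = 1 := fun j => by
    have := congrFun₂ (mem_unitaryGroup_iff'.1 hW) j j
    simp only [mul_apply, star_apply, RCLike.star_def, RCLike.conj_mul, one_apply_eq] at this
    exact_mod_cast this
  exact mem_doublyStochastic_iff_sum.2 ⟨fun i j => sq_nonneg ‖W i j‖, hrow, hcol⟩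

end Stochastic

theorem mul_diagonal_mul_conjTranspose_apply_self {m n 𝕜 : Type*} [Fintype n] [DecidableEq n]
    [RCLike 𝕜] (W : Matrix m n 𝕜) (d : n → ℝ) (i : m) :
    (W * diagonal (fun j => (d j : 𝕜)) * Wᴴ) i i = ((∑ j, d j * ‖W i j‖ ^ 2 : ℝ) : 𝕜) := by
  rw [mul_apply]
  simp only [mul_diagonal, conjTranspose_apply, RCLike.star_def, RCLike.ofReal_sum,
    RCLike.ofReal_mul, RCLike.ofReal_pow]
  exact Finset.sum_congr rfl fun j _ => by rw [mul_right_comm, RCLike.mul_conj, mul_comm]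

theorem conjTranspose_mul_mul_eq_diagonal {n 𝕜 : Type*} [Fintype n] [DecidableEq n] [RCLike 𝕜]
    {A V : Matrix n n 𝕜} (hV : V ∈ unitaryGroup n 𝕜) {lam : n → 𝕜}
    (hAV : ∀ j, A *ᵥ Vᵀ j = lam j • Vᵀ j) : Vᴴ * A * V = diagonal lam := by
  have hcol : A * V = V * diagonal lam := by
    ext k j
    have hk := congrFun (hAV j) k
    simp only [mulVec, dotProduct, transpose_apply, Pi.smul_apply, smul_eq_mul] at hk
    rw [mul_diagonal, mul_apply, hk, mul_comm]
  rw [Matrix.mul_assoc, hcol, ← Matrix.mul_assoc, ← star_eq_conjTranspose,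
    mem_unitaryGroup_iff'.1 hV, Matrix.one_mul]

section Dotc

variable {N : ℕ}

theorem dotc_mulVec_eq_conjTranspose_mul_mul_apply {ι : Type*} (v : ι → Fin N → ℂ)
    (B : Matrix (Fin N) (Fin N) ℂ) (i j : ι) :
    dotc (v i) (B *ᵥ v j) = ((of v)ᵀᴴ * B * (of v)ᵀ) i j := by
  simp only [dotc, mul_apply, mulVec, dotProduct, conjTranspose_apply, transpose_apply, of_apply,
    Finset.mul_sum, Finset.sum_mul, RCLike.star_def, mul_assoc]
  exact Finset.sum_comm

theorem transpose_of_mem_unitaryGroup {v : Fin N → Fin N → ℂ}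
    (hv : ∀ i j, dotc (v i) (v j) = if i = j then 1 else 0) :
    (of v)ᵀ ∈ unitaryGroup (Fin N) ℂ := by
  refine mem_unitaryGroup_iff'.2 (ext fun i j => ?_)
  have := dotc_mulVec_eq_conjTranspose_mul_mul_apply v 1 i j
  rw [one_mulVec, Matrix.mul_one] at this
  rw [star_eq_conjTranspose, one_apply, ← this, hv]

theorem re_dotc_mul_mul_star_mulVec_eq_sum {A U : Matrix (Fin N) (Fin N) ℂ}
    {v : Fin N → Fin N → ℂ} {lam : Fin N → ℝ}
    (hv : ∀ i j, dotc (v i) (v j) = if i = j then 1 else 0)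
    (hAv : ∀ i, A *ᵥ v i = (lam i : ℂ) • v i) (i : Fin N) :
    (dotc (v i) ((U * A * star U) *ᵥ v i)).re = ∑ j, lam j * ‖dotc (v i) (U *ᵥ v j)‖ ^ 2 := by
  simp only [dotc_mulVec_eq_conjTranspose_mul_mul_apply]
  set V := (of v)ᵀ
  have hV := transpose_of_mem_unitaryGroup hv
  have hD : Vᴴ * A * V = diagonal fun j => (lam j : ℂ) :=
    conjTranspose_mul_mul_eq_diagonal hV hAv
  have hconj : Vᴴ * (U * A * star U) * V = (Vᴴ * U * V) * (Vᴴ * A * V) * (Vᴴ * U * V)ᴴ := by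
    have hVV : V * Vᴴ = 1 := mem_unitaryGroup_iff.1 hV
    simp only [conjTranspose_mul, conjTranspose_conjTranspose, star_eq_conjTranspose,
      Matrix.mul_assoc]
    simp only [← Matrix.mul_assoc V, hVV, Matrix.one_mul]
  rw [hconj, hD]
  exact (congrArg Complex.re (mul_diagonal_mul_conjTranspose_apply_self _ lam i)).trans
    (Complex.ofReal_re _)

end Dotc

theorem stmt_2_general {N : ℕ} (A U : Matrix (Fin N) (Fin N) ℂ)
    (hU : U ∈ Matrix.unitaryGroup (Fin N) ℂ)
    (v : Fin N → (Fin N → ℂ)) (lam : Fin N → ℝ)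
    (hortho : ∀ i j, dotc (v i) (v j) = if i = j then 1 else 0)
    (heig : ∀ i, A.mulVec (v i) = (lam i : ℂ) • v i)
    (f : ℝ → ℝ) :
    ∃ c : Equiv.Perm (Fin N) → ℝ,
      (∀ σ, c σ ∈ Set.Icc (0 : ℝ) 1) ∧ (∑ σ, c σ = 1) ∧
      (∀ i j, ‖dotc (v i) (U.mulVec (v j))‖ ^ 2
          = ∑ σ, c σ * (if i = σ j then 1 else 0)) ∧
      (∑ i, f (lam i) * (lam i - (dotc (v i) ((U * A * star U).mulVec (v i))).re)
          = ∑ σ, c σ * ∑ j, lam j * (f (lam j) - f (lam (σ j)))) := by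
  have hV := transpose_of_mem_unitaryGroup hortho
  have hW : (of v)ᵀᴴ * U * (of v)ᵀ ∈ unitaryGroup (Fin N) ℂ :=
    mul_mem (mul_mem (Unitary.star_mem hV) hU) hV
  obtain ⟨c, hc01, hc1, hc⟩ :=
    exists_perm_weights_of_mem_doublyStochastic (norm_sq_entries_mem_doublyStochastic hW)
  have hM : ∀ i j, ‖dotc (v i) (U *ᵥ v j)‖ ^ 2 = ∑ σ, c σ * if i = σ j then 1 else 0 :=
    fun i j => by rw [dotc_mulVec_eq_conjTranspose_mul_mul_apply]; exact hc i j
  refine ⟨c, hc01, hc1, hM, ?_⟩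
  simp_rw [re_dotc_mul_mul_star_mulVec_eq_sum hortho heig]
  exact sum_mul_sub_sum_eq_sum_perm hc1 hM lam (f ∘ lam)

/-- Birkhoff–von Neumann applied to the doubly stochastic matrix `(|⟨U v_j, v_i⟩|²)`,
and the resulting rewriting of `Σ_i f(λ_i)(λ_i − ⟨U A U* v_i, v_i⟩)`. -/
theorem stmt_2 {N : ℕ} (A U : Matrix (Fin N) (Fin N) ℂ) (hA : A.IsHermitian)
    (hU : U ∈ Matrix.unitaryGroup (Fin N) ℂ)
    (v : Fin N → (Fin N → ℂ)) (lam : Fin N → ℝ)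
    (hortho : ∀ i j, dotc (v i) (v j) = if i = j then 1 else 0)
    (heig : ∀ i, A.mulVec (v i) = (lam i : ℂ) • v i)
    (hsort : ∀ i j : Fin N, i ≤ j → lam j ≤ lam i)
    (f : ℝ → ℝ) (hf : MonotoneOn f (Set.range lam)) :
    ∃ c : Equiv.Perm (Fin N) → ℝ,
      (∀ σ, c σ ∈ Set.Icc (0 : ℝ) 1) ∧ (∑ σ, c σ = 1) ∧
      (∀ i j, ‖dotc (v i) (U.mulVec (v j))‖ ^ 2
          = ∑ σ, c σ * (if i = σ j then 1 else 0)) ∧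
      (∑ i, f (lam i) * (lam i - (dotc (v i) ((U * A * star U).mulVec (v i))).re)
          = ∑ σ, c σ * ∑ j, lam j * (f (lam j) - f (lam (σ j)))) :=
  stmt_2_general A U hU v lam hortho heig f
end

section
/- Let X : [0,τ] → M_n(ℂ) be a differentiable solution of X'(t) = [φ(X(t)), X(t)] with X(t) ∈ M_n[a,b] for all t, where φ satisfies condition (C0). Then for every m ∈ ℕ the Schatten norm ‖X(t)‖_{2m} is a decreasing function of t on [0,τ]. -/
open Matrix Set Filter

/-- The absolute value `|A| = (A* A)^{1/2}` of a matrix. -/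
noncomputable def matAbs {m : Type*} [Fintype m] [DecidableEq m]
    (A : Matrix m m ℂ) : Matrix m m ℂ :=
  hermCalc (Aᴴ * A) Real.sqrt

/-- `φ(A) = φ₁(|A|) − φ₂(|A*|)`. -/
noncomputable def phiMat {m : Type*} [Fintype m] [DecidableEq m]
    (φ₁ φ₂ : ℝ → ℝ) (A : Matrix m m ℂ) : Matrix m m ℂ :=
  hermCalc (matAbs A) φ₁ - hermCalc (matAbs Aᴴ) φ₂

/-!
Write `P = X*X` and `Q = XX*`, so that `P^m = g(|X|)` and `Q^m = g(|X*|)` with `g x = x^(2m)`.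
Along the flow `X' = [φ(X), X]` the derivative of `Tr P^m` is `2m Re Tr(φ(X) (Q^m - P^m))`.
The matrices `|X|` and `|X*|` have the same eigenvalues `s_i`, and expanding in their eigenbases
gives `Tr(f(|X|) g(|X*|)) = ∑ w_ij f(s_i) g(s_j)`, where `w_ij = |U_ij|²` for a unitary `U` is
doubly stochastic. By Birkhoff's theorem and the rearrangement inequality this is at most
`∑ f(s_i) g(s_i) = Tr(f(|X|) g(|X|))` whenever `f` and `g` increase together on the `s_i`;
with `f = φ₁` and `f = φ₂` this makes the derivative nonpositive.
-/

section Rearrangement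

variable {n : Type*} [Fintype n] [DecidableEq n]

theorem Monovary.dotProduct_mulVec_le_of_mem_doublyStochastic_s5 {f g : n → ℝ} (hfg : Monovary f g)
    {w : Matrix n n ℝ} (hw : w ∈ doublyStochastic ℝ n) : f ⬝ᵥ (w *ᵥ g) ≤ f ⬝ᵥ g := by
  rw [← SetLike.mem_coe, doublyStochastic_eq_convexHull_permMatrix] at hw
  refine convexHull_min (t := {w | f ⬝ᵥ (w *ᵥ g) ≤ f ⬝ᵥ g}) ?_
    (convex_halfSpace_le (f := fun w : Matrix n n ℝ => f ⬝ᵥ (w *ᵥ g)) ?_ _) hw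
  · rintro _ ⟨σ, rfl⟩
    simpa [permMatrix_mulVec, dotProduct] using hfg.sum_mul_comp_perm_le_sum_mul (σ := σ)
  · exact ⟨fun v w => by simp [add_mulVec, dotProduct_add],
      fun c v => by simp [smul_mulVec, dotProduct_smul]⟩

theorem MonotoneOn.monovary_comp {ι α β γ : Type*} [LinearOrder α] [Preorder β] [LinearOrder γ]
    {f : α → β} {g : α → γ} {s : Set α} (hf : MonotoneOn f s) (hg : MonotoneOn g s) {x : ι → α}
    (hx : ∀ i, x i ∈ s) : Monovary (f ∘ x) (g ∘ x) :=
  fun i j hij => hf (hx i) (hx j) (hg.reflect_lt (hx i) (hx j) hij).le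

end Rearrangement

section Unitary

variable {𝕜 : Type*} [RCLike 𝕜] {n : Type*} [DecidableEq n]

def normSqEntries (W : Matrix n n 𝕜) : Matrix n n ℝ := of fun i j => ‖W i j‖ ^ 2

theorem normSqEntries_one : normSqEntries (1 : Matrix n n 𝕜) = 1 := by
  ext i j
  by_cases h : i = j <;> simp [normSqEntries, one_apply, h]

variable [Fintype n]

theorem normSqEntries_mem_doublyStochastic {W : Matrix n n 𝕜} (hW : W ∈ unitaryGroup n 𝕜) :
    normSqEntries W ∈ doublyStochastic ℝ n := by
  have hrow : ∀ i, ∑ j, (‖W i j‖ ^ 2 : 𝕜) = 1 := fun i => by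
    simpa [mul_apply, ← RCLike.mul_conj] using congrArg (· i i) (Unitary.mul_star_self_of_mem hW)
  have hcol : ∀ j, ∑ i, (‖W i j‖ ^ 2 : 𝕜) = 1 := fun j => by
    simpa [mul_apply, ← RCLike.conj_mul] using congrArg (· j j) (Unitary.star_mul_self_of_mem hW)
  refine mem_doublyStochastic_iff_sum.2
    ⟨fun i j => by simp [normSqEntries], fun i => ?_, fun j => ?_⟩
  · exact_mod_cast hrow i
  · exact_mod_cast hcol j

theorem trace_conj_diagonal_mul_conj_diagonal (U V : Matrix n n 𝕜) (x y : n → ℝ) :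
    trace (U * Matrix.diagonal (RCLike.ofReal ∘ x) * star U *
      (V * Matrix.diagonal (RCLike.ofReal ∘ y) * star V)) =
      ((x ⬝ᵥ (normSqEntries (star U * V) *ᵥ y) : ℝ) : 𝕜) := by
  set W := star U * V
  calc _ = trace (Matrix.diagonal (RCLike.ofReal ∘ x) *
        (W * Matrix.diagonal (RCLike.ofReal ∘ y) * star W)) := by
        simp only [W, star_mul, star_star, Matrix.mul_assoc]
        rw [trace_mul_comm U]
        simp only [Matrix.mul_assoc]
    _ = _ := by
        simp only [trace, diag_apply, diagonal_mul]
        simp only [Function.comp_apply, mul_apply, diagonal_apply, mul_ite, mul_zero,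
          Finset.sum_ite_eq', Finset.mem_univ, ↓reduceIte, star_apply, RCLike.star_def,
          Finset.mul_sum, dotProduct, mulVec, normSqEntries, of_apply, map_sum,
          RCLike.algebraMap_eq_ofReal, map_mul, map_pow, ← RCLike.mul_conj]
        exact Finset.sum_congr rfl fun i _ => Finset.sum_congr rfl fun j _ => by ring

theorem Matrix.IsHermitian.trace_cfc_mul_cfc {A B : Matrix n n 𝕜} (hA : A.IsHermitian)
    (hB : B.IsHermitian) (f g : ℝ → ℝ) :
    trace (cfc f A * cfc g B) = ((f ∘ hA.eigenvalues ⬝ᵥ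
      (normSqEntries (star (hA.eigenvectorUnitary : Matrix n n 𝕜) *
        (hB.eigenvectorUnitary : Matrix n n 𝕜)) *ᵥ
        g ∘ hB.eigenvalues) : ℝ) : 𝕜) := by
  rw [hA.cfc_eq, hB.cfc_eq, IsHermitian.cfc, IsHermitian.cfc, Unitary.conjStarAlgAut_apply,
    Unitary.conjStarAlgAut_apply]
  exact trace_conj_diagonal_mul_conj_diagonal _ _ _ _

theorem Matrix.IsHermitian.re_trace_cfc_mul_cfc_le {A B : Matrix n n 𝕜} (hA : A.IsHermitian)
    (hB : B.IsHermitian) (heig : hB.eigenvalues = hA.eigenvalues) {f g : ℝ → ℝ}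
    (hfg : Monovary (f ∘ hA.eigenvalues) (g ∘ hA.eigenvalues)) :
    RCLike.re (trace (cfc f A * cfc g B)) ≤ RCLike.re (trace (cfc f A * cfc g A)) := by
  rw [hA.trace_cfc_mul_cfc hB, hA.trace_cfc_mul_cfc hA, Unitary.coe_star_mul_self,
    normSqEntries_one, one_mulVec, heig, RCLike.ofReal_re, RCLike.ofReal_re]
  exact hfg.dotProduct_mulVec_le_of_mem_doublyStochastic_s5
    (normSqEntries_mem_doublyStochastic
      (mul_mem (Unitary.star_mem (SetLike.coe_mem _)) (SetLike.coe_mem _)))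

theorem Matrix.IsHermitian.charpoly_cfc_eq_of_charpoly_eq {A B : Matrix n n 𝕜}
    (hA : A.IsHermitian) (hB : B.IsHermitian) (h : A.charpoly = B.charpoly) (f : ℝ → ℝ) :
    (cfc f A).charpoly = (cfc f B).charpoly := by
  rw [hA.charpoly_cfc_eq, hB.charpoly_cfc_eq, (hA.eigenvalues_eq_eigenvalues_iff hB).2 h]

end Unitary

section MatAbs

open scoped ComplexOrder

variable {n : Type*} [Fintype n] [DecidableEq n] {A B : Matrix n n ℂ}

theorem hermCalc_eq_cfc (hA : A.IsHermitian) (f : ℝ → ℝ) : hermCalc A f = cfc f A := by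
  rw [hA.cfc_eq, IsHermitian.cfc, Unitary.conjStarAlgAut_apply, hermCalc, dif_pos hA]
  rfl

theorem isHermitian_hermCalc (hA : A.IsHermitian) (f : ℝ → ℝ) : (hermCalc A f).IsHermitian := by
  rw [hermCalc_eq_cfc hA]
  exact cfc_predicate f A

theorem matAbs_eq_cfc (X : Matrix n n ℂ) : matAbs X = cfc Real.sqrt (Xᴴ * X) :=
  hermCalc_eq_cfc (isHermitian_conjTranspose_mul_self X) _

theorem isHermitian_matAbs (X : Matrix n n ℂ) : (matAbs X).IsHermitian :=
  isHermitian_hermCalc (isHermitian_conjTranspose_mul_self X) _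

theorem matAbs_sq (X : Matrix n n ℂ) : matAbs X ^ 2 = Xᴴ * X := by
  have hX := posSemidef_conjTranspose_mul_self X
  calc matAbs X ^ 2 = cfc (fun x => √x ^ 2) (Xᴴ * X) := by
        rw [matAbs_eq_cfc]; exact (cfc_pow Real.sqrt 2 (Xᴴ * X) (ha := hX.1)).symm
    _ = cfc id (Xᴴ * X) := cfc_congr fun x hx => by
        obtain ⟨i, rfl⟩ := hX.1.spectrum_real_eq_range_eigenvalues ▸ hx
        exact Real.sq_sqrt (hX.eigenvalues_nonneg i)
    _ = Xᴴ * X := cfc_id ℝ _ hX.1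

theorem eigenvalues_matAbs_conjTranspose (X : Matrix n n ℂ) :
    (isHermitian_matAbs Xᴴ).eigenvalues = (isHermitian_matAbs X).eigenvalues := by
  rw [IsHermitian.eigenvalues_eq_eigenvalues_iff, matAbs_eq_cfc, matAbs_eq_cfc,
    conjTranspose_conjTranspose]
  exact (isHermitian_mul_conjTranspose_self X).charpoly_cfc_eq_of_charpoly_eq
    (isHermitian_conjTranspose_mul_self X) (charpoly_mul_comm _ _) _

theorem isHermitian_phiMat (φ₁ φ₂ : ℝ → ℝ) (X : Matrix n n ℂ) :
    (phiMat φ₁ φ₂ X).IsHermitian :=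
  (isHermitian_hermCalc (isHermitian_matAbs X) φ₁).sub
    (isHermitian_hermCalc (isHermitian_matAbs Xᴴ) φ₂)

theorem re_trace_conjTranspose_mul_self_pow_nonneg (X : Matrix n n ℂ) (k : ℕ) :
    0 ≤ (trace ((Xᴴ * X) ^ k)).re :=
  (Complex.nonneg_iff.1 ((posSemidef_conjTranspose_mul_self X).pow k).trace_nonneg).1

theorem re_trace_phiMat_mul_sub_nonpos {a b : ℝ} (ha : 0 ≤ a) {φ₁ φ₂ : ℝ → ℝ}
    (hm1 : MonotoneOn φ₁ (Icc a b)) (hm2 : MonotoneOn φ₂ (Icc a b)) {X : Matrix n n ℂ}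
    (hX : spectrum ℝ (matAbs X) ⊆ Icc a b) (k : ℕ) :
    (trace (phiMat φ₁ φ₂ X * ((X * Xᴴ) ^ k - (Xᴴ * X) ^ k))).re ≤ 0 := by
  have hA := isHermitian_matAbs X
  have hB := isHermitian_matAbs Xᴴ
  have heig : hB.eigenvalues = hA.eigenvalues := eigenvalues_matAbs_conjTranspose X
  have hmem : ∀ i, hA.eigenvalues i ∈ Icc a b := fun i => hX (hA.eigenvalues_mem_spectrum_real i)
  have hg : MonotoneOn (fun x : ℝ => x ^ (2 * k)) (Icc a b) := fun x hx y _ hxy =>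
    pow_le_pow_left₀ (ha.trans hx.1) hxy _
  have hP : (Xᴴ * X) ^ k = cfc (fun x : ℝ => x ^ (2 * k)) (matAbs X) := by
    rw [cfc_pow_id _ _ hA.isSelfAdjoint, pow_mul, matAbs_sq]
  have hQ : (X * Xᴴ) ^ k = cfc (fun x : ℝ => x ^ (2 * k)) (matAbs Xᴴ) := by
    rw [cfc_pow_id _ _ hB.isSelfAdjoint, pow_mul, matAbs_sq, conjTranspose_conjTranspose]
  have h₁ := hA.re_trace_cfc_mul_cfc_le hB heig (hm1.monovary_comp hg hmem)
  have h₂ := hB.re_trace_cfc_mul_cfc_le hA heig.symm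
    (hm2.monovary_comp hg (by rwa [heig]))
  rw [phiMat, hermCalc_eq_cfc hA, hermCalc_eq_cfc hB, hP, hQ]
  simp only [sub_mul, mul_sub, trace_sub, Complex.sub_re, RCLike.re_to_complex] at h₁ h₂ ⊢
  linarith

end MatAbs

theorem HasDerivWithinAt.re {f : ℝ → ℂ} {f' : ℂ} {s : Set ℝ} {t : ℝ}
    (hf : HasDerivWithinAt f f' s t) : HasDerivWithinAt (fun u => (f u).re) f'.re s t :=
  Complex.reCLM.hasFDerivAt.comp_hasDerivWithinAt t hf

section EntrywiseDeriv

variable {𝕜 : Type*} [RCLike 𝕜] {l m o : Type*} [Fintype m]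

def HasEntrywiseDerivWithinAt (A : ℝ → Matrix l o 𝕜) (A' : Matrix l o 𝕜) (s : Set ℝ) (t : ℝ) :
    Prop :=
  ∀ i j, HasDerivWithinAt (fun u => A u i j) (A' i j) s t

namespace HasEntrywiseDerivWithinAt

variable {s : Set ℝ} {t : ℝ}

theorem mul {A : ℝ → Matrix l m 𝕜} {B : ℝ → Matrix m o 𝕜} {A' : Matrix l m 𝕜} {B' : Matrix m o 𝕜}
    (hA : HasEntrywiseDerivWithinAt A A' s t) (hB : HasEntrywiseDerivWithinAt B B' s t) :
    HasEntrywiseDerivWithinAt (fun u => A u * B u) (A' * B t + A t * B') s t := fun i j => by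
  simpa [mul_apply, Finset.sum_add_distrib] using
    HasDerivWithinAt.fun_sum fun k _ => (hA i k).mul (hB k j)

theorem conjTranspose {A : ℝ → Matrix l o 𝕜} {A' : Matrix l o 𝕜}
    (hA : HasEntrywiseDerivWithinAt A A' s t) :
    HasEntrywiseDerivWithinAt (fun u => (A u)ᴴ) A'ᴴ s t := fun i j => by
  simpa using (hA j i).star

variable {A : ℝ → Matrix m m 𝕜} {A' : Matrix m m 𝕜}

open Finset in
theorem pow [DecidableEq m] (hA : HasEntrywiseDerivWithinAt A A' s t) (k : ℕ) :
    HasEntrywiseDerivWithinAt (fun u => A u ^ (k + 1))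
      (∑ p ∈ antidiagonal k, A t ^ p.1 * A' * A t ^ p.2) s t := by
  induction k with
  | zero => simpa using hA
  | succ k ih =>
    have h := ih.mul hA
    simp only [← pow_succ] at h
    convert h using 1
    rw [Finset.Nat.sum_antidiagonal_succ', Finset.sum_mul, add_comm]
    simp [pow_succ, Matrix.mul_assoc]

theorem trace (hA : HasEntrywiseDerivWithinAt A A' s t) :
    HasDerivWithinAt (fun u => (A u).trace) A'.trace s t :=
  HasDerivWithinAt.fun_sum fun i _ => hA i i

open Finset in
theorem trace_pow [DecidableEq m] (hA : HasEntrywiseDerivWithinAt A A' s t) (k : ℕ) :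
    HasDerivWithinAt (fun u => (A u ^ (k + 1)).trace) ((k + 1) * (A t ^ k * A').trace) s t := by
  have hterm : ∀ p ∈ antidiagonal k, (A t ^ p.1 * A' * A t ^ p.2).trace = (A t ^ k * A').trace :=
    fun p hp => by rw [trace_mul_cycle, ← pow_add, add_comm, mem_antidiagonal.1 hp]
  convert (hA.pow k).trace using 1
  rw [trace_sum, sum_congr rfl hterm, sum_const, Nat.card_antidiagonal, nsmul_eq_mul]
  push_cast
  ring

end HasEntrywiseDerivWithinAt

end EntrywiseDeriv

theorem trace_conjTranspose_mul_self_pow_mul_commutator {R n : Type*} [CommRing R] [StarRing R]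
    [Fintype n] [DecidableEq n] (X Φ : Matrix n n R) (hΦ : Φ.IsHermitian) (k : ℕ) :
    trace ((Xᴴ * X) ^ k * ((Φ * X - X * Φ)ᴴ * X + Xᴴ * (Φ * X - X * Φ))) =
      2 * trace (Φ * ((X * Xᴴ) ^ (k + 1) - (Xᴴ * X) ^ (k + 1))) := by
  have hQ : X * (Xᴴ * X) ^ k * Xᴴ = (X * Xᴴ) ^ (k + 1) := by
    rw [← mul_pow_mul, pow_succ, Matrix.mul_assoc]
  have e₁ : trace ((Xᴴ * X) ^ k * Xᴴ * Φ * X) = trace (Φ * (X * Xᴴ) ^ (k + 1)) := by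
    rw [trace_mul_comm, ← Matrix.mul_assoc, ← Matrix.mul_assoc, hQ, trace_mul_comm]
  have e₂ : trace ((Xᴴ * X) ^ k * Φ * Xᴴ * X) = trace (Φ * (Xᴴ * X) ^ (k + 1)) := by
    rw [Matrix.mul_assoc _ Xᴴ X, trace_mul_comm, ← Matrix.mul_assoc, ← pow_succ', trace_mul_comm]
  have e₃ : trace ((Xᴴ * X) ^ k * Xᴴ * X * Φ) = trace (Φ * (Xᴴ * X) ^ (k + 1)) := by
    rw [Matrix.mul_assoc _ Xᴴ X, ← pow_succ, trace_mul_comm]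
  rw [conjTranspose_sub, conjTranspose_mul, conjTranspose_mul, hΦ.eq]
  simp only [mul_sub, sub_mul, mul_add, trace_add, trace_sub, ← Matrix.mul_assoc]
  rw [e₁, e₂, e₃]
  ring

theorem hasDerivWithinAt_re_trace_conjTranspose_mul_self_pow {n : Type*} [Fintype n]
    [DecidableEq n] {X : ℝ → Matrix n n ℂ} {Φ : Matrix n n ℂ} (hΦ : Φ.IsHermitian) {s : Set ℝ}
    {t : ℝ} (hX : HasEntrywiseDerivWithinAt X (Φ * X t - X t * Φ) s t) (k : ℕ) :
    HasDerivWithinAt (fun u => (trace (((X u)ᴴ * X u) ^ (k + 1))).re)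
      (2 * (k + 1) * (trace (Φ * ((X t * (X t)ᴴ) ^ (k + 1) - ((X t)ᴴ * X t) ^ (k + 1)))).re)
      s t := by
  refine ((hX.conjTranspose.mul hX).trace_pow k).re.congr_deriv ?_
  rw [trace_conjTranspose_mul_self_pow_mul_commutator _ _ hΦ]
  simp only [Complex.mul_re, Complex.add_re, Complex.natCast_re, Complex.one_re, Complex.re_ofNat,
    Complex.im_ofNat, zero_mul, sub_zero, Complex.add_im, Complex.natCast_im, Complex.one_im,
    add_zero, Complex.mul_im]
  ring

theorem stmt_5_general {n : Type*} [Fintype n] [DecidableEq n] (a b τ : ℝ)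
    (ha : 0 ≤ a) (φ₁ φ₂ : ℝ → ℝ)
    (hm1 : MonotoneOn φ₁ (Set.Icc a b)) (hm2 : MonotoneOn φ₂ (Set.Icc a b))
    (X : ℝ → Matrix n n ℂ)
    (hspec : ∀ t ∈ Set.Icc 0 τ, spectrum ℝ (matAbs (X t)) ⊆ Set.Icc a b)
    (hode : ∀ t ∈ Set.Icc 0 τ, ∀ i j, HasDerivWithinAt (fun s => X s i j)
      ((phiMat φ₁ φ₂ (X t) * X t - X t * phiMat φ₁ φ₂ (X t)) i j) (Set.Icc 0 τ) t) :
    ∀ m : ℕ, 0 < m →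
      AntitoneOn (fun t => (Matrix.trace (((X t)ᴴ * X t) ^ m)).re ^ ((2 * (m : ℝ))⁻¹))
        (Set.Icc 0 τ) := by
  intro m hm
  obtain ⟨k, rfl⟩ : ∃ k, m = k + 1 := ⟨m - 1, by omega⟩
  have hderiv := fun t (ht : t ∈ Icc 0 τ) =>
    hasDerivWithinAt_re_trace_conjTranspose_mul_self_pow (isHermitian_phiMat φ₁ φ₂ (X t))
      (hode t ht) k
  have hF : AntitoneOn (fun t => (trace (((X t)ᴴ * X t) ^ (k + 1))).re) (Icc 0 τ) :=
    antitoneOn_of_hasDerivWithinAt_nonpos (convex_Icc 0 τ)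
      (fun t ht => (hderiv t ht).continuousWithinAt)
      (fun t ht => (hderiv t (interior_subset ht)).mono interior_subset)
      (fun t ht => mul_nonpos_of_nonneg_of_nonpos (by positivity)
        (re_trace_phiMat_mul_sub_nonpos ha hm1 hm2 (hspec t (interior_subset ht)) _))
  exact fun s hs t ht hst => Real.rpow_le_rpow (re_trace_conjTranspose_mul_self_pow_nonneg _ _)
    (hF hs ht hst) (by positivity)

/-- Along a solution of `X' = [φ(X), X]` staying in `M_n[a,b]`, each Schatten
`2m`-norm `(Tr((X*X)^m))^{1/(2m)}` is decreasing on `[0,τ]`. -/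
theorem stmt_5 {n : Type*} [Fintype n] [DecidableEq n] (a b τ : ℝ)
    (ha : 0 ≤ a) (hab : a ≤ b) (hτ : 0 ≤ τ) (φ₁ φ₂ : ℝ → ℝ)
    (hc1 : ContinuousOn φ₁ (Set.Icc a b)) (hc2 : ContinuousOn φ₂ (Set.Icc a b))
    (hm1 : MonotoneOn φ₁ (Set.Icc a b)) (hm2 : MonotoneOn φ₂ (Set.Icc a b))
    (hs : StrictMonoOn (φ₁ + φ₂) (Set.Icc a b))
    (X : ℝ → Matrix n n ℂ)
    (hspec : ∀ t ∈ Set.Icc 0 τ, spectrum ℝ (matAbs (X t)) ⊆ Set.Icc a b)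
    (hode : ∀ t ∈ Set.Icc 0 τ, ∀ i j, HasDerivWithinAt (fun s => X s i j)
      ((phiMat φ₁ φ₂ (X t) * X t - X t * phiMat φ₁ φ₂ (X t)) i j) (Set.Icc 0 τ) t) :
    ∀ m : ℕ, 0 < m →
      AntitoneOn (fun t => (Matrix.trace (((X t)ᴴ * X t) ^ m)).re ^ ((2 * (m : ℝ))⁻¹))
        (Set.Icc 0 τ) :=
  stmt_5_general a b τ ha φ₁ φ₂ hm1 hm2 X hspec hode
end
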